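/- arXiv:1103.0409 — 2 statements merged into one kernel-verified Lean document; each statement's English description precedes it below -/
import Mathlib

section
/- Let f ∈ L²(ℝ) and g ∈ 𝒮(ℝ). Then the short-time Fourier transform V(f,g)(x,ω) = ∫ f(t) conj(g(t-x)) e^{-2πiωt} dt is partially differentiable with respect to x at every point, with ∂ₓ V(f,g)(x,ω) = V(f, -g')(x,ω). -/
/-!
Differentiate under the integral sign. For `x'` within distance `1` of `x`, the derivative
`f t · conj (-g' (t - x'))` of the integrand is dominated by `‖f t‖ · B (t - x)`, where `B ∈ L²`
bounds all translates of `g'` by at most `1`: since `1 + ‖s‖ ≤ 2 (1 + ‖s - y‖)` for `‖y‖ ≤ 1`,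
the Schwartz decay of `g'` at `s - y` gives decay at `s` uniformly in `y`. By Cauchy–Schwarz the
bound is integrable.
-/

open MeasureTheory Complex

/-- The short-time Fourier transform
`V(f,g)(x,ω) = ∫ f(t) conj(g(t-x)) e^{-2πiωt} dt`. -/
noncomputable def stft (f g : ℝ → ℂ) (x ω : ℝ) : ℂ :=
  ∫ t : ℝ, f t * (starRingEnd ℂ) (g (t - x)) *
    Complex.exp (-2 * Real.pi * Complex.I * ω * t)

open ComplexConjugate ENNReal SchwartzMap

theorem one_add_norm_le_mul_one_add_norm_sub {E : Type*} [SeminormedAddCommGroup E]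
    {s y : E} {R : ℝ} (hy : ‖y‖ ≤ R) : 1 + ‖s‖ ≤ (1 + R) * (1 + ‖s - y‖) := by
  have hs : ‖s‖ ≤ ‖s - y‖ + ‖y‖ := norm_le_norm_sub_add s y
  nlinarith [norm_nonneg y, norm_nonneg (s - y)]

namespace SchwartzMap

variable {E F : Type*} [NormedAddCommGroup E] [NormedSpace ℝ E] [NormedAddCommGroup F]
  [NormedSpace ℝ F]

theorem exists_memLp_bound_comp_sub [MeasurableSpace E] [OpensMeasurableSpace E]
    (μ : Measure E) [hμ : μ.HasTemperateGrowth] (h : 𝓢(E, F)) (p : ℝ≥0∞) (R : ℝ) :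
    ∃ B : E → ℝ, MemLp B p μ ∧ ∀ s y, ‖y‖ ≤ R → ‖h (s - y)‖ ≤ B s := by
  obtain ⟨k, hk⟩ := hμ.exists_eLpNorm_lt_top p
  set M := 2 ^ k * (Finset.Iic (k, 0)).sup (fun m => SchwartzMap.seminorm ℝ m.1 m.2) h
  have hweight : MemLp (fun s : E => (1 + ‖s‖) ^ (-k : ℝ)) p μ :=
    ⟨(Continuous.rpow_const (by fun_prop) fun s => .inl (by positivity)).aestronglyMeasurable, hk⟩
  refine ⟨fun s => (1 + R) ^ k * M * (1 + ‖s‖) ^ (-k : ℝ), hweight.const_mul _, fun s y hy => ?_⟩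
  have hdecay : (1 + ‖s - y‖) ^ k * ‖h (s - y)‖ ≤ M := by
    simpa using one_add_le_sup_seminorm_apply (𝕜 := ℝ) (m := (k, 0)) le_rfl le_rfl h (s - y)
  have hR : 0 ≤ 1 + R := by linarith [(norm_nonneg y).trans hy]
  dsimp only
  rw [Real.rpow_neg (by positivity), Real.rpow_natCast, ← div_eq_mul_inv,
    le_div_iff₀ (by positivity)]
  calc ‖h (s - y)‖ * (1 + ‖s‖) ^ k
      ≤ ‖h (s - y)‖ * ((1 + R) * (1 + ‖s - y‖)) ^ k := by
        gcongr; exact one_add_norm_le_mul_one_add_norm_sub hy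
    _ = (1 + R) ^ k * ((1 + ‖s - y‖) ^ k * ‖h (s - y)‖) := by rw [mul_pow]; ring
    _ ≤ (1 + R) ^ k * M := by gcongr

end SchwartzMap

theorem hasDerivAt_conj_comp_const_sub {𝕜 : Type*} [RCLike 𝕜] {g : ℝ → 𝕜} {t x : ℝ}
    (hg : DifferentiableAt ℝ g (t - x)) :
    HasDerivAt (fun x' => conj (g (t - x'))) (conj (-deriv g (t - x))) x := by
  simpa using (hg.hasDerivAt.scomp x ((hasDerivAt_id x).const_sub t)).star

theorem hasDerivAt_integral_mul_conj_comp_sub {𝕜 : Type*} [RCLike 𝕜] {p q : ℝ≥0∞}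
    [HolderTriple p q 1] {φ : ℝ → 𝕜} (hφ : MemLp φ p) (g : 𝓢(ℝ, 𝕜)) (x : ℝ) :
    HasDerivAt (fun x' => ∫ t, φ t * conj (g (t - x')))
      (∫ t, φ t * conj (-deriv g (t - x))) x := by
  have translate {ψ : ℝ → ℝ} (hψ : MemLp ψ q) : MemLp (fun t => ψ (t - x)) q :=
    hψ.comp_measurePreserving (measurePreserving_sub_right volume x)
  obtain ⟨B, hB, hg'B⟩ := (derivCLM 𝕜 𝕜 g).exists_memLp_bound_comp_sub volume q 1
  have hmeas (w : ℝ → 𝕜) (hw : Continuous w) :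
      AEStronglyMeasurable (fun t => φ t * conj (w t)) volume :=
    hφ.1.mul (RCLike.continuous_conj.comp hw).aestronglyMeasurable
  refine (hasDerivAt_integral_of_dominated_loc_of_deriv_le (bound := fun t => ‖φ t‖ * B (t - x))
    (F' := fun x' t => φ t * conj (-deriv g (t - x')))
    (Metric.ball_mem_nhds x one_pos) (.of_forall fun x' => hmeas (fun t => g (t - x')) (by fun_prop))
    ?_ (hmeas (fun t => -deriv g (t - x)) (((g.smooth 1).continuous_deriv le_rfl).comp
      (continuous_sub_right x)).neg) ?_ (hφ.norm.integrable_mul (translate hB)) ?_).2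
  · refine (hφ.norm.integrable_mul (translate (g.memLp q).norm)).mono' (hmeas _ (by fun_prop)) ?_
    exact .of_forall fun t => by simp
  · refine .of_forall fun t x' hx' => ?_
    have hg' := hg'B (t - x) (x' - x) (by simpa [← dist_eq_norm] using hx'.le)
    simp only [sub_sub_sub_cancel_right, derivCLM_apply] at hg'
    simpa using mul_le_mul_of_nonneg_left hg' (norm_nonneg (φ t))
  · exact .of_forall fun t x' _ =>
      (hasDerivAt_conj_comp_const_sub g.differentiableAt).const_mul (φ t)

/-- For `f ∈ L²(ℝ)` and a Schwartz window `g`, the STFT is partially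
differentiable in the time variable `x`, with `∂ₓ V(f,g) = V(f, -g')`. -/
theorem stft_hasDerivAt_time (f : ℝ → ℂ) (hf : MemLp f 2 (volume : Measure ℝ))
    (g : SchwartzMap ℝ ℂ) (x ω : ℝ) :
    HasDerivAt (fun x' : ℝ => stft f (⇑g) x' ω)
      (stft f (fun t : ℝ => -deriv (⇑g) t) x ω) x := by
  set e : ℝ → ℂ := fun t => Complex.exp (-2 * Real.pi * Complex.I * ω * t)
  have hfe : MemLp (fun t => f t * e t) 2 :=
    hf.of_le (hf.1.mul (by fun_prop)) (.of_forall fun t => by simp [e, Complex.norm_exp])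
  have hstft (w : ℝ → ℂ) (x' : ℝ) : stft f w x' ω = ∫ t, f t * e t * conj (w (t - x')) := by
    simp only [stft, e, mul_right_comm]
  simp only [hstft]
  exact hasDerivAt_integral_mul_conj_comp_sub (q := 2) hfe g x
end

section
/- Let V = U + iW : ℝ² → ℂ be C³, with V(x₀,ω₀) = 0 and det J_V(x₀,ω₀) ≠ 0. Then the phase derivative along the horizontal path converges to a finite limit: lim_{x→x₀} (U·Wₓ - W·Uₓ)/(U² + W²) (x, ω₀) = (Uₓ·Wₓₓ - Wₓ·Uₓₓ)(x₀,ω₀) / (2(Uₓ² + Wₓ²)(x₀,ω₀)) ∈ ℝ. -/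
/-!
Restrict to the line `ω = ω₀` and write `u, w` for `U, W` there. Numerator `u w' - w u'` and
denominator `u² + w²` both vanish at `x₀`, with derivatives `u w'' - w u''` and
`2 (u u' + w w')`. These again vanish at `x₀`, but after division by `x - x₀` they tend to
`u' w'' - w' u''` and `2 (u'² + w'²)` at `x₀`, since `u / (x - x₀) → u'(x₀)`. The latter limit is
nonzero because `(Uₓ, Wₓ)` is a column of the invertible Jacobian, so L'Hôpital's rule applies.
-/

open Filter Topology

theorem tendsto_div_sub_of_hasDerivAt {f : ℝ → ℝ} {f' a : ℝ} (hf : HasDerivAt f f' a)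
    (ha : f a = 0) : Tendsto (fun x => f x / (x - a)) (𝓝[≠] a) (𝓝 f') := by
  simpa [slope_fun_def_field, ha] using hf.tendsto_slope

theorem tendsto_div_of_tendsto_div_sub {f g : ℝ → ℝ} {a p q : ℝ}
    (hf : Tendsto (fun x => f x / (x - a)) (𝓝[≠] a) (𝓝 p))
    (hg : Tendsto (fun x => g x / (x - a)) (𝓝[≠] a) (𝓝 q)) (hq : q ≠ 0) :
    Tendsto (fun x => f x / g x) (𝓝[≠] a) (𝓝 (p / q)) := by
  refine (hf.div hg hq).congr' ?_
  filter_upwards [self_mem_nhdsWithin] with x hx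
  exact div_div_div_cancel_right₀ (sub_ne_zero.mpr hx) _ _

theorem eventually_ne_zero_of_tendsto_div_sub {g : ℝ → ℝ} {a q : ℝ}
    (hg : Tendsto (fun x => g x / (x - a)) (𝓝[≠] a) (𝓝 q)) (hq : q ≠ 0) :
    ∀ᶠ x in 𝓝[≠] a, g x ≠ 0 := by
  filter_upwards [hg.eventually_ne hq] with x hx hgx
  exact hx (by simp [hgx])

theorem tendsto_phase_derivative_of_simple_zero {u w u' w' u'' w'' : ℝ → ℝ} {a : ℝ}
    (hu : ∀ᶠ x in 𝓝 a, HasDerivAt u (u' x) x) (hw : ∀ᶠ x in 𝓝 a, HasDerivAt w (w' x) x)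
    (hu' : ∀ᶠ x in 𝓝 a, HasDerivAt u' (u'' x) x) (hw' : ∀ᶠ x in 𝓝 a, HasDerivAt w' (w'' x) x)
    (hu'' : ContinuousAt u'' a) (hw'' : ContinuousAt w'' a) (hua : u a = 0) (hwa : w a = 0)
    (hne : u' a ^ 2 + w' a ^ 2 ≠ 0) :
    Tendsto (fun x => (u x * w' x - w x * u' x) / (u x ^ 2 + w x ^ 2)) (𝓝[≠] a)
      (𝓝 ((u' a * w'' a - w' a * u'' a) / (2 * (u' a ^ 2 + w' a ^ 2)))) := by
  have hua' := hu.self_of_nhds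
  have hwa' := hw.self_of_nhds
  have hu_slope := tendsto_div_sub_of_hasDerivAt hua' hua
  have hw_slope := tendsto_div_sub_of_hasDerivAt hwa' hwa
  have punctured {f : ℝ → ℝ} (hf : ContinuousAt f a) : Tendsto f (𝓝[≠] a) (𝓝 (f a)) :=
    hf.tendsto.mono_left nhdsWithin_le_nhds
  have hu_lim := punctured hua'.continuousAt
  have hw_lim := punctured hwa'.continuousAt
  have hu'_lim := punctured hu'.self_of_nhds.continuousAt
  have hw'_lim := punctured hw'.self_of_nhds.continuousAt
  have hu''_lim := punctured hu''
  have hw''_lim := punctured hw''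
  have hN_slope : Tendsto (fun x => (u x * w'' x - w x * u'' x) / (x - a)) (𝓝[≠] a)
      (𝓝 (u' a * w'' a - w' a * u'' a)) :=
    ((hu_slope.mul hw''_lim).sub (hw_slope.mul hu''_lim)).congr fun x => by ring
  have hD_slope : Tendsto (fun x => 2 * (u x * u' x + w x * w' x) / (x - a)) (𝓝[≠] a)
      (𝓝 (2 * (u' a ^ 2 + w' a ^ 2))) := by
    convert ((hu_slope.mul hu'_lim).add (hw_slope.mul hw'_lim)).const_mul 2 using 2 <;> ring
  have htwo : 2 * (u' a ^ 2 + w' a ^ 2) ≠ 0 := mul_ne_zero two_ne_zero hne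
  refine HasDerivAt.lhopital_zero_nhdsNE (f' := fun x => u x * w'' x - w x * u'' x)
    (g' := fun x => 2 * (u x * u' x + w x * w' x)) ?_ ?_
    (eventually_ne_zero_of_tendsto_div_sub hD_slope htwo) ?_ ?_
    (tendsto_div_of_tendsto_div_sub hN_slope hD_slope htwo)
  · filter_upwards [nhdsWithin_le_nhds (hu.and (hw.and (hu'.and hw')))]
      with x ⟨hux, hwx, hu'x, hw'x⟩
    exact ((hux.mul hw'x).sub (hwx.mul hu'x)).congr_deriv (by ring)
  · filter_upwards [nhdsWithin_le_nhds (hu.and hw)] with x ⟨hux, hwx⟩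
    exact ((hux.pow 2).add (hwx.pow 2)).congr_deriv (by ring)
  · simpa [hua, hwa] using (hu_lim.mul hw'_lim).sub (hw_lim.mul hu'_lim)
  · simpa [hua, hwa] using (hu_lim.pow 2).add (hw_lim.pow 2)

theorem hasDerivAt_apply_prodMk_left {𝕜 E F : Type*} [NontriviallyNormedField 𝕜]
    [NormedAddCommGroup E] [NormedSpace 𝕜 E] [NormedAddCommGroup F] [NormedSpace 𝕜 F]
    {G : 𝕜 × F → E} {x : 𝕜} {y : F} (hG : DifferentiableAt 𝕜 G (x, y)) :
    HasDerivAt (fun t => G (t, y)) (fderiv 𝕜 G (x, y) (1, 0)) x :=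
  hG.hasFDerivAt.comp_hasDerivAt x ((hasDerivAt_id x).prodMk (hasDerivAt_const x y))

theorem sq_add_sq_ne_zero_of_mul_sub_mul_ne_zero {R : Type*} [CommRing R] [LinearOrder R]
    [IsStrictOrderedRing R] {a b c d : R} (h : a * d - b * c ≠ 0) :
    a ^ 2 + c ^ 2 ≠ 0 := by
  contrapose! h
  obtain ⟨rfl, rfl⟩ : a = 0 ∧ c = 0 := by constructor <;> nlinarith [sq_nonneg a, sq_nonneg c]
  ring

theorem stft_phase_derivative_horizontal_limit_general (V : ℝ × ℝ → ℂ) (hV : ContDiff ℝ 3 V)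
    (x₀ ω₀ : ℝ) (hzero : V (x₀, ω₀) = 0)
    (U W : ℝ × ℝ → ℝ) (hU : U = fun p => (V p).re) (hW : W = fun p => (V p).im)
    (Ux Uω Wx Wω Uxx Wxx : ℝ × ℝ → ℝ)
    (hUx : Ux = fun p => fderiv ℝ U p (1, 0))
    (hWx : Wx = fun p => fderiv ℝ W p (1, 0))
    (hUxx : Uxx = fun p => fderiv ℝ Ux p (1, 0)) (hWxx : Wxx = fun p => fderiv ℝ Wx p (1, 0))
    (hdet : Ux (x₀, ω₀) * Wω (x₀, ω₀) - Uω (x₀, ω₀) * Wx (x₀, ω₀) ≠ 0) :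
    Tendsto
      (fun x : ℝ => (U (x, ω₀) * Wx (x, ω₀) - W (x, ω₀) * Ux (x, ω₀)) /
        (U (x, ω₀) ^ 2 + W (x, ω₀) ^ 2))
      (𝓝[≠] x₀)
      (𝓝 ((Ux (x₀, ω₀) * Wxx (x₀, ω₀) - Wx (x₀, ω₀) * Uxx (x₀, ω₀)) /
        (2 * (Ux (x₀, ω₀) ^ 2 + Wx (x₀, ω₀) ^ 2)))) := by
  have partial_x : ∀ {n : ℕ} {G Gx : ℝ × ℝ → ℝ}, ContDiff ℝ (n + 1) G →
      Gx = (fun p => fderiv ℝ G p (1, 0)) → ContDiff ℝ n Gx := fun hG hGx =>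
    hGx ▸ (hG.fderiv_right le_rfl).clm_apply contDiff_const
  have horizontal : ∀ {G Gx : ℝ × ℝ → ℝ}, Differentiable ℝ G →
      Gx = (fun p => fderiv ℝ G p (1, 0)) →
      ∀ᶠ x in 𝓝 x₀, HasDerivAt (fun x => G (x, ω₀)) (Gx (x, ω₀)) x := fun hG hGx =>
    .of_forall fun x => hGx ▸ hasDerivAt_apply_prodMk_left (hG _)
  have hUc : ContDiff ℝ 3 U := hU ▸ Complex.reCLM.contDiff.comp hV
  have hWc : ContDiff ℝ 3 W := hW ▸ Complex.imCLM.contDiff.comp hV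
  have hUxc : ContDiff ℝ 2 Ux := partial_x hUc hUx
  have hWxc : ContDiff ℝ 2 Wx := partial_x hWc hWx
  have hline : Continuous fun x : ℝ => (x, ω₀) := by fun_prop
  exact tendsto_phase_derivative_of_simple_zero
    (horizontal (hUc.differentiable (by norm_num)) hUx)
    (horizontal (hWc.differentiable (by norm_num)) hWx)
    (horizontal (hUxc.differentiable (by norm_num)) hUxx)
    (horizontal (hWxc.differentiable (by norm_num)) hWxx)
    ((partial_x hUxc hUxx).continuous.comp hline).continuousAt
    ((partial_x hWxc hWxx).continuous.comp hline).continuousAt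
    (by simp [hU, hzero]) (by simp [hW, hzero])
    (sq_add_sq_ne_zero_of_mul_sub_mul_ne_zero hdet)

/-- Phase derivative of the STFT near a zero, horizontal path: if `V = U + iW` is
`C³`, `V(x₀,ω₀) = 0` and `det J_V(x₀,ω₀) ≠ 0`, then
`(U Wₓ - W Uₓ)/(U² + W²)(x, ω₀)` converges, as `x → x₀`, to the finite limit
`(Uₓ Wₓₓ - Wₓ Uₓₓ)(x₀,ω₀) / (2 (Uₓ² + Wₓ²)(x₀,ω₀))`. -/
theorem stft_phase_derivative_horizontal_limit (V : ℝ × ℝ → ℂ) (hV : ContDiff ℝ 3 V)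
    (x₀ ω₀ : ℝ) (hzero : V (x₀, ω₀) = 0)
    (U W : ℝ × ℝ → ℝ) (hU : U = fun p => (V p).re) (hW : W = fun p => (V p).im)
    (Ux Uω Wx Wω Uxx Wxx : ℝ × ℝ → ℝ)
    (hUx : Ux = fun p => fderiv ℝ U p (1, 0)) (hUω : Uω = fun p => fderiv ℝ U p (0, 1))
    (hWx : Wx = fun p => fderiv ℝ W p (1, 0)) (hWω : Wω = fun p => fderiv ℝ W p (0, 1))
    (hUxx : Uxx = fun p => fderiv ℝ Ux p (1, 0)) (hWxx : Wxx = fun p => fderiv ℝ Wx p (1, 0))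
    (hdet : Ux (x₀, ω₀) * Wω (x₀, ω₀) - Uω (x₀, ω₀) * Wx (x₀, ω₀) ≠ 0) :
    Tendsto
      (fun x : ℝ => (U (x, ω₀) * Wx (x, ω₀) - W (x, ω₀) * Ux (x, ω₀)) /
        (U (x, ω₀) ^ 2 + W (x, ω₀) ^ 2))
      (𝓝[≠] x₀)
      (𝓝 ((Ux (x₀, ω₀) * Wxx (x₀, ω₀) - Wx (x₀, ω₀) * Uxx (x₀, ω₀)) /
        (2 * (Ux (x₀, ω₀) ^ 2 + Wx (x₀, ω₀) ^ 2)))) :=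
  stft_phase_derivative_horizontal_limit_general V hV x₀ ω₀ hzero U W hU hW Ux Uω Wx Wω Uxx Wxx hUx
    hWx hUxx hWxx hdet
end
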